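/- Let G = (V, E) be a finite strongly connected directed graph with at least two vertices, let α ∈ [0, 1), and let φ : V → ℝ be a positive left eigenvector of the probability matrix M_α with φ M_α = φ. Then for every function f : V → ℝ and every vertex v_i ∈ V, Γ₂(f, f)(v_i) = (1/2)(Δf(v_i))² − Γ(f, f)(v_i) + H(f)(v_i), where H(f)(v_i) = (1/(16φ(v_i))) [ Σ_{v_j ∈ N^out(v_i)} (w_{ij}/φ(v_j)) Σ_{v_a ∈ N^out(v_j)} w_{ja}(f(v_a) − 2f(v_j) + f(v_i))² + Σ_{v_j ∈ N^out(v_i)} (w_{ij}/φ(v_j)) Σ_{v_b ∈ N^in(v_j)} w_{bj}(f(v_b) − 2f(v_j) + f(v_i))² + Σ_{v_k ∈ N^in(v_i)} (w_{ki}/φ(v_k)) Σ_{v_c ∈ N^out(v_k)} w_{kc}(f(v_c) − 2f(v_k) + f(v_i))² + Σ_{v_k ∈ N^in(v_i)} (w_{ki}/φ(v_k)) Σ_{v_d ∈ N^in(v_k)} w_{dk}(f(v_d) − 2f(v_k) + f(v_i))² ]. -/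

import Mathlib

open Finset

noncomputable section

/-- Out-neighborhood `S^out(x) = {y | (x,y) ∈ E}`. -/
def Sout {V : Type*} [Fintype V] (E : V → V → Prop) [DecidableRel E] (x : V) : Finset V :=
  Finset.univ.filter (fun y => E x y)

/-- In-neighborhood `S^in(x) = {z | (z,x) ∈ E}`. -/
def Sin {V : Type*} [Fintype V] (E : V → V → Prop) [DecidableRel E] (x : V) : Finset V :=
  Finset.univ.filter (fun z => E z x)

/-- `N^out(x) = {x} ∪ S^out(x)`. -/
def Nout {V : Type*} [Fintype V] [DecidableEq V] (E : V → V → Prop) [DecidableRel E]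
    (x : V) : Finset V :=
  insert x (Sout E x)

/-- `N^in(x) = {x} ∪ S^in(x)`. -/
def Nin {V : Type*} [Fintype V] [DecidableEq V] (E : V → V → Prop) [DecidableRel E]
    (x : V) : Finset V :=
  insert x (Sin E x)

/-- Degree `d_x = |S^out(x)|`. -/
def deg {V : Type*} [Fintype V] (E : V → V → Prop) [DecidableRel E] (x : V) : ℕ :=
  (Sout E x).card

/-- The probability matrix `M_α`. -/
def Mat {V : Type*} [Fintype V] [DecidableEq V] (E : V → V → Prop) [DecidableRel E]
    (α : ℝ) (x y : V) : ℝ :=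
  if y = x then α else if E x y then (1 - α) / (deg E x : ℝ) else 0

/-- The weights `w_{ij} = φ(v_i) (M_α)_{i,j}`. -/
def wt {V : Type*} [Fintype V] [DecidableEq V] (E : V → V → Prop) [DecidableRel E]
    (α : ℝ) (φ : V → ℝ) (x y : V) : ℝ :=
  φ x * Mat E α x y

/-- The Laplacian on directed graphs. -/
def lap {V : Type*} [Fintype V] [DecidableEq V] (E : V → V → Prop) [DecidableRel E]
    (α : ℝ) (φ : V → ℝ) (f : V → ℝ) (x : V) : ℝ :=
  (1 / (2 * φ x)) *
    ((∑ y ∈ Sout E x, wt E α φ x y * (f y - f x)) +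
     (∑ z ∈ Sin E x, wt E α φ z x * (f z - f x)))

/-- `Γ(f,g) = (1/2)(Δ(fg) - fΔg - gΔf)`. -/
def Gam {V : Type*} [Fintype V] [DecidableEq V] (E : V → V → Prop) [DecidableRel E]
    (α : ℝ) (φ : V → ℝ) (f g : V → ℝ) (x : V) : ℝ :=
  (1 / 2) * (lap E α φ (f * g) x - f x * lap E α φ g x - g x * lap E α φ f x)

/-- `Γ₂(f,g) = (1/2)(ΔΓ(f,g) - Γ(f,Δg) - Γ(Δf,g))`. -/
def Gam2 {V : Type*} [Fintype V] [DecidableEq V] (E : V → V → Prop) [DecidableRel E]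
    (α : ℝ) (φ : V → ℝ) (f g : V → ℝ) (x : V) : ℝ :=
  (1 / 2) * (lap E α φ (Gam E α φ f g) x - Gam E α φ f (lap E α φ g) x -
    Gam E α φ (lap E α φ f) g x)

/-- `C(v_i)`: the minimum of `w_{ij}/φ(v_j)` over `v_j ∈ S^out(v_i)` and
`w_{ki}/φ(v_k)` over `v_k ∈ S^in(v_i)`. -/
def Cmin {V : Type*} [Fintype V] [DecidableEq V] (E : V → V → Prop) [DecidableRel E]
    (α : ℝ) (φ : V → ℝ) (x : V) : ℝ :=
  sInf ((fun j => wt E α φ x j / φ j) '' (Sout E x : Set V) ∪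
        (fun k => wt E α φ k x / φ k) '' (Sin E x : Set V))

/-- The quantity `H(f)(v_i)`. -/
def Hfun {V : Type*} [Fintype V] [DecidableEq V] (E : V → V → Prop) [DecidableRel E]
    (α : ℝ) (φ : V → ℝ) (f : V → ℝ) (vi : V) : ℝ :=
  (1 / (16 * φ vi)) *
    ((∑ vj ∈ Nout E vi, (wt E α φ vi vj / φ vj) *
        ∑ va ∈ Nout E vj, wt E α φ vj va * (f va - 2 * f vj + f vi) ^ 2) +
     (∑ vj ∈ Nout E vi, (wt E α φ vi vj / φ vj) *
        ∑ vb ∈ Nin E vj, wt E α φ vb vj * (f vb - 2 * f vj + f vi) ^ 2) +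
     (∑ vk ∈ Nin E vi, (wt E α φ vk vi / φ vk) *
        ∑ vc ∈ Nout E vk, wt E α φ vk vc * (f vc - 2 * f vk + f vi) ^ 2) +
     (∑ vk ∈ Nin E vi, (wt E α φ vk vi / φ vk) *
        ∑ vd ∈ Nin E vk, wt E α φ vd vk * (f vd - 2 * f vk + f vi) ^ 2))

/-!
For a Markov kernel `P` (rows summing to one) and the generator `L f x = ∑ y, P x y (f y - f x)`,
expanding `(f z - f y)²` around the second difference `f z - 2 f y + f x` gives
`Γ(f,f)(y) = ½ ∑ z, P y z (f z - 2 f y + f x)² + (f y - f x) L f y - ½ (f y - f x)²`;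
averaging this over `y` against `P x ·` and subtracting `2 Γ(f, L f)(x)` yields the decomposition of
`Γ₂`. The directed-graph Laplacian is such a generator, for the symmetrized kernel
`(w_{xy} + w_{yx}) / (2 φ x)`: its rows sum to one because `φ M_α = φ` gives the column sums of `w`,
and a positive fixed vector of the substochastic matrix `M_α` forces `M_α` to be stochastic.
-/

section CarreDuChamp

variable {V : Type*}

def carreDuChamp (L : (V → ℝ) → V → ℝ) (f g : V → ℝ) (x : V) : ℝ :=
  (1 / 2) * (L (f * g) x - f x * L g x - g x * L f x)

def iteratedCarreDuChamp (L : (V → ℝ) → V → ℝ) (f g : V → ℝ) (x : V) : ℝ :=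
  (1 / 2) * (L (carreDuChamp L f g) x - carreDuChamp L f (L g) x - carreDuChamp L (L f) g x)

theorem carreDuChamp_comm (L : (V → ℝ) → V → ℝ) (f g : V → ℝ) (x : V) :
    carreDuChamp L f g x = carreDuChamp L g f x := by
  rw [carreDuChamp, carreDuChamp, mul_comm f g]
  ring

variable [Fintype V]

def kernelLaplacian (P : V → V → ℝ) (f : V → ℝ) (x : V) : ℝ :=
  ∑ y, P x y * (f y - f x)

theorem carreDuChamp_kernelLaplacian (P : V → V → ℝ) (f g : V → ℝ) (x : V) :
    carreDuChamp (kernelLaplacian P) f g x =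
      (1 / 2) * ∑ y, P x y * ((f y - f x) * (g y - g x)) := by
  simp only [carreDuChamp, kernelLaplacian, Finset.mul_sum, ← Finset.sum_sub_distrib, Pi.mul_apply]
  exact Finset.sum_congr rfl fun y _ => by ring

theorem carreDuChamp_kernelLaplacian_self_eq_secondDiff {P : V → V → ℝ}
    (hP : ∀ x, ∑ y, P x y = 1) (f : V → ℝ) (x y : V) :
    carreDuChamp (kernelLaplacian P) f f y =
      (1 / 2) * ∑ z, P y z * (f z - 2 * f y + f x) ^ 2 +
        (f y - f x) * kernelLaplacian P f y - (1 / 2) * (f y - f x) ^ 2 := by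
  have hsq : ∀ z, P y z * ((f z - f y) * (f z - f y)) =
      P y z * (f z - 2 * f y + f x) ^ 2 + 2 * (f y - f x) * (P y z * (f z - f y)) -
        (f y - f x) ^ 2 * P y z := fun z => by ring
  rw [carreDuChamp_kernelLaplacian, Finset.sum_congr rfl fun z _ => hsq z,
    Finset.sum_sub_distrib, Finset.sum_add_distrib, ← Finset.mul_sum, ← Finset.mul_sum, hP,
    kernelLaplacian]
  ring

theorem iteratedCarreDuChamp_kernelLaplacian_self {P : V → V → ℝ}
    (hP : ∀ x, ∑ y, P x y = 1) (f : V → ℝ) (x : V) :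
    iteratedCarreDuChamp (kernelLaplacian P) f f x =
      (1 / 2) * kernelLaplacian P f x ^ 2 - carreDuChamp (kernelLaplacian P) f f x +
        (1 / 4) * ∑ y, P x y * ∑ z, P y z * (f z - 2 * f y + f x) ^ 2 := by
  set L := kernelLaplacian P
  set Γ := carreDuChamp L f f
  set S := ∑ y, P x y * ((f y - f x) * L f y)
  have hLΓ : L Γ x = (1 / 2) * ∑ y, P x y * ∑ z, P y z * (f z - 2 * f y + f x) ^ 2 + S -
      2 * Γ x := by
    have hΓ : ∀ y, P x y * (Γ y - Γ x) =
        (1 / 2) * (P x y * ∑ z, P y z * (f z - 2 * f y + f x) ^ 2) +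
          P x y * ((f y - f x) * L f y) - (1 / 2) * (P x y * ((f y - f x) * (f y - f x))) -
            Γ x * P x y := fun y => by
      rw [show Γ y = _ from carreDuChamp_kernelLaplacian_self_eq_secondDiff hP f x y]
      ring
    have hΓx : Γ x = (1 / 2) * ∑ y, P x y * ((f y - f x) * (f y - f x)) :=
      carreDuChamp_kernelLaplacian P f f x
    rw [show L Γ x = ∑ y, P x y * (Γ y - Γ x) from rfl, Finset.sum_congr rfl fun y _ => hΓ y,
      Finset.sum_sub_distrib, Finset.sum_sub_distrib, Finset.sum_add_distrib, ← Finset.mul_sum,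
      ← Finset.mul_sum, ← Finset.mul_sum, hP, ← hΓx]
    ring
  have hΓL : carreDuChamp L f (L f) x = (1 / 2) * (S - L f x * L f x) := by
    have h : ∀ y, P x y * ((f y - f x) * (L f y - L f x)) =
        P x y * ((f y - f x) * L f y) - L f x * (P x y * (f y - f x)) := fun y => by ring
    rw [carreDuChamp_kernelLaplacian, Finset.sum_congr rfl fun y _ => h y,
      Finset.sum_sub_distrib, ← Finset.mul_sum]
    rfl
  rw [iteratedCarreDuChamp, carreDuChamp_comm L (L f) f, hLΓ, hΓL]
  ring

end CarreDuChamp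

theorem sum_row_eq_one_of_fixed_of_sum_row_le_one {V : Type*} [Fintype V] {M : V → V → ℝ}
    {φ : V → ℝ} (hφ : ∀ v, 0 < φ v) (hM : ∀ x, ∑ y, M x y ≤ 1)
    (hfix : ∀ y, ∑ x, φ x * M x y = φ y) (x : V) : ∑ y, M x y = 1 := by
  have hdefect : ∑ v, φ v * (1 - ∑ y, M v y) = 0 := by
    simp only [mul_sub, mul_one, Finset.sum_sub_distrib, Finset.mul_sum]
    rw [Finset.sum_comm, sub_eq_zero]
    exact (Finset.sum_congr rfl fun y _ => hfix y).symm
  have hnonneg : ∀ v ∈ Finset.univ, 0 ≤ φ v * (1 - ∑ y, M v y) :=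
    fun v _ => mul_nonneg (hφ v).le (sub_nonneg.mpr (hM v))
  have hx := (Finset.sum_eq_zero_iff_of_nonneg hnonneg).mp hdefect x (Finset.mem_univ x)
  rcases mul_eq_zero.mp hx with h | h
  · exact absurd h (hφ x).ne'
  · linarith

section DirectedGraph

variable {V : Type*} [Fintype V] [DecidableEq V] (E : V → V → Prop) [DecidableRel E]
  {α : ℝ} {φ : V → ℝ}

theorem sum_Mat_le_one (hα : α < 1) (x : V) : ∑ y, Mat E α x y ≤ 1 := by
  have hsplit : ∀ y, Mat E α x y =
      (if y = x then α else 0) +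
        (if y ∈ (Sout E x).erase x then (1 - α) / (deg E x : ℝ) else 0) := fun y => by
    by_cases hy : y = x
    · simp [Mat, hy]
    · by_cases hxy : E x y <;> simp [Mat, hy, hxy, Sout]
  rw [Finset.sum_congr rfl fun y _ => hsplit y, Finset.sum_add_distrib, Finset.sum_ite_eq',
    Finset.sum_ite_mem, Finset.univ_inter, Finset.sum_const, nsmul_eq_mul, if_pos (Finset.mem_univ x)]
  have hcard : (((Sout E x).erase x).card : ℝ) ≤ deg E x := by
    exact_mod_cast Finset.card_erase_le
  have hdeg : (deg E x : ℝ) * ((1 - α) / deg E x) ≤ 1 - α := by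
    rcases (Nat.cast_nonneg (deg E x) : (0 : ℝ) ≤ deg E x).eq_or_lt with h | h
    · rw [← h]; linarith
    · rw [mul_div_cancel₀ _ h.ne']
  have hstep := mul_le_mul_of_nonneg_right hcard
    (div_nonneg (sub_nonneg.mpr hα.le) (Nat.cast_nonneg (deg E x)))
  linarith

variable {E}

theorem wt_eq_zero_of_notMem_Nout {x y : V} (hy : y ∉ Nout E x) : wt E α φ x y = 0 := by
  simp only [Nout, Sout, mem_insert, mem_filter, mem_univ, true_and, not_or] at hy
  simp [wt, Mat, hy.1, hy.2]

theorem wt_eq_zero_of_notMem_Nin {x y : V} (hy : y ∉ Nin E x) : wt E α φ y x = 0 := by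
  simp only [Nin, Sin, mem_insert, mem_filter, mem_univ, true_and, not_or] at hy
  simp [wt, Mat, Ne.symm hy.1, hy.2]

theorem sum_Nout_eq_sum_univ {g : V → ℝ} {x : V} (hg : ∀ y, wt E α φ x y = 0 → g y = 0) :
    ∑ y ∈ Nout E x, g y = ∑ y, g y :=
  Finset.sum_subset (Finset.subset_univ _) fun _ _ hy => hg _ (wt_eq_zero_of_notMem_Nout hy)

theorem sum_Nin_eq_sum_univ {g : V → ℝ} {x : V} (hg : ∀ y, wt E α φ y x = 0 → g y = 0) :
    ∑ y ∈ Nin E x, g y = ∑ y, g y :=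
  Finset.sum_subset (Finset.subset_univ _) fun _ _ hy => hg _ (wt_eq_zero_of_notMem_Nin hy)

variable (E α φ)

def symmetrizedKernel (x y : V) : ℝ :=
  (wt E α φ x y + wt E α φ y x) / (2 * φ x)

theorem lap_eq_kernelLaplacian : lap E α φ = kernelLaplacian (symmetrizedKernel E α φ) := by
  ext f x
  have hout : ∑ y ∈ Sout E x, wt E α φ x y * (f y - f x) = ∑ y, wt E α φ x y * (f y - f x) := by
    rw [← sum_Nout_eq_sum_univ fun y h => by rw [h, zero_mul], Nout,
      Finset.sum_insert_zero (by rw [sub_self, mul_zero])]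
  have hin : ∑ y ∈ Sin E x, wt E α φ y x * (f y - f x) = ∑ y, wt E α φ y x * (f y - f x) := by
    rw [← sum_Nin_eq_sum_univ fun y h => by rw [h, zero_mul], Nin,
      Finset.sum_insert_zero (by rw [sub_self, mul_zero])]
  rw [lap, hout, hin, ← Finset.sum_add_distrib, Finset.mul_sum, kernelLaplacian]
  exact Finset.sum_congr rfl fun y _ => by rw [symmetrizedKernel]; ring

theorem Hfun_eq_sum_symmetrizedKernel (f : V → ℝ) (x : V) :
    Hfun E α φ f x = (1 / 4) * ∑ y, symmetrizedKernel E α φ x y *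
      ∑ z, symmetrizedKernel E α φ y z * (f z - 2 * f y + f x) ^ 2 := by
  have hinnerOut : ∀ y (g : V → ℝ), ∑ z ∈ Nout E y, wt E α φ y z * g z = ∑ z, wt E α φ y z * g z :=
    fun _ _ => sum_Nout_eq_sum_univ fun _ h => by rw [h, zero_mul]
  have hinnerIn : ∀ y (g : V → ℝ), ∑ z ∈ Nin E y, wt E α φ z y * g z = ∑ z, wt E α φ z y * g z :=
    fun _ _ => sum_Nin_eq_sum_univ fun _ h => by rw [h, zero_mul]
  have houterOut : ∀ g : V → ℝ, ∑ y ∈ Nout E x, wt E α φ x y / φ y * g y =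
      ∑ y, wt E α φ x y / φ y * g y :=
    fun _ => sum_Nout_eq_sum_univ fun _ h => by rw [h, zero_div, zero_mul]
  have houterIn : ∀ g : V → ℝ, ∑ y ∈ Nin E x, wt E α φ y x / φ y * g y =
      ∑ y, wt E α φ y x / φ y * g y :=
    fun _ => sum_Nin_eq_sum_univ fun _ h => by rw [h, zero_div, zero_mul]
  have hkernelInner : ∀ y, ∑ z, symmetrizedKernel E α φ y z * (f z - 2 * f y + f x) ^ 2 =
      (∑ z, wt E α φ y z * (f z - 2 * f y + f x) ^ 2 +
        ∑ z, wt E α φ z y * (f z - 2 * f y + f x) ^ 2) / (2 * φ y) := fun y => by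
    rw [← Finset.sum_add_distrib, Finset.sum_div]
    exact Finset.sum_congr rfl fun z _ => by rw [symmetrizedKernel]; ring
  simp only [Hfun, hinnerOut, hinnerIn]
  simp only [houterOut, houterIn, hkernelInner]
  rw [← Finset.sum_add_distrib, ← Finset.sum_add_distrib, ← Finset.sum_add_distrib,
    Finset.mul_sum, Finset.mul_sum]
  exact Finset.sum_congr rfl fun y _ => by rw [symmetrizedKernel]; ring

theorem sum_symmetrizedKernel {x : V} (hx : φ x ≠ 0) (hrow : ∑ y, Mat E α x y = 1)
    (hcol : ∑ y, φ y * Mat E α y x = φ x) : ∑ y, symmetrizedKernel E α φ x y = 1 := by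
  have hout : ∑ y, wt E α φ x y = φ x := by
    simp only [wt, ← Finset.mul_sum, hrow, mul_one]
  have hin : ∑ y, wt E α φ y x = φ x := hcol
  simp only [symmetrizedKernel, ← Finset.sum_div, Finset.sum_add_distrib, hout, hin]
  field_simp
  ring

end DirectedGraph

theorem gamma2_decomposition_general {V : Type*} [Fintype V] [DecidableEq V] (E : V → V → Prop) [DecidableRel E]
    (α : ℝ) (φ : V → ℝ)
    (hα1 : α < 1)
    (hφ : ∀ v : V, 0 < φ v)
    (heig : ∀ y : V, ∑ x : V, φ x * Mat E α x y = φ y) :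
    ∀ (f : V → ℝ) (vi : V),
      Gam2 E α φ f f vi =
        (1 / 2) * (lap E α φ f vi) ^ 2 - Gam E α φ f f vi + Hfun E α φ f vi := by
  intro f vi
  have hstoch : ∀ x, ∑ y, Mat E α x y = 1 :=
    sum_row_eq_one_of_fixed_of_sum_row_le_one hφ (sum_Mat_le_one E hα1) heig
  have hP : ∀ x, ∑ y, symmetrizedKernel E α φ x y = 1 :=
    fun x => sum_symmetrizedKernel E α φ (hφ x).ne' (hstoch x) (heig x)
  change iteratedCarreDuChamp (lap E α φ) f f vi =
    (1 / 2) * (lap E α φ f vi) ^ 2 - carreDuChamp (lap E α φ) f f vi + Hfun E α φ f vi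
  rw [lap_eq_kernelLaplacian, Hfun_eq_sum_symmetrizedKernel]
  exact iteratedCarreDuChamp_kernelLaplacian_self hP f vi

theorem gamma2_decomposition {V : Type*} [Fintype V] [DecidableEq V] (E : V → V → Prop) [DecidableRel E]
    (α : ℝ) (φ : V → ℝ)
    (hcard : 1 < Fintype.card V)
    (hconn : ∀ x y : V, x ≠ y → Relation.TransGen E x y)
    (hα0 : 0 ≤ α) (hα1 : α < 1)
    (hφ : ∀ v : V, 0 < φ v)
    (heig : ∀ y : V, ∑ x : V, φ x * Mat E α x y = φ y) :
    ∀ (f : V → ℝ) (vi : V),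
      Gam2 E α φ f f vi =
        (1 / 2) * (lap E α φ f vi) ^ 2 - Gam E α φ f f vi + Hfun E α φ f vi :=
  gamma2_decomposition_general E α φ hα1 hφ heig
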